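/- There exists a sequence {X_k}_{k≥0} of m×m matrices with X₀ = 0 such that, for every k ≥ 0, the matrix equation X = Σ_{ℓ=−1}^q A_ℓ(X_k) X^{ℓ+1} has a minimal nonnegative solution and X_{k+1} equals it. Moreover this sequence satisfies 0 ≤ X_k ≤ X_{k+1} and X_{k+1}·1 ≤ 1 entrywise for all k ≥ 0, and X_k converges entrywise, as k → ∞, to the minimal nonnegative solution G of X = Σ_{i=0}^∞ A_{i−1} Xⁱ. -/

import Mathlib

open Matrix

/-- Entrywise order on square real matrices. -/
def Mle {m : ℕ} (X Y : Matrix (Fin m) (Fin m) ℝ) : Prop := ∀ i j, X i j ≤ Y i j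

/-- `G` is the minimal nonnegative solution of `X = ∑_{i=0}^∞ A_{i-1} Xⁱ`
(`A i` denotes `A_{i-1}` of the paper). -/
def IsMinSol {m : ℕ} (A : ℕ → Matrix (Fin m) (Fin m) ℝ)
    (G : Matrix (Fin m) (Fin m) ℝ) : Prop :=
  Mle 0 G ∧ Summable (fun i => A i * G ^ i) ∧ G = ∑' i, A i * G ^ i ∧
    ∀ Y, Mle 0 Y → Summable (fun i => A i * Y ^ i) → Y = ∑' i, A i * Y ^ i → Mle G Y

/-- `Z` is the minimal nonnegative solution of the polynomial matrix equation
`Z = ∑_{ℓ=-1}^q C_ℓ Z^{ℓ+1}`, written with the shifted index `ℓ+1 ∈ {0,…,p}`,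
`p = q+1`. -/
def IsMinPolySol {m : ℕ} (p : ℕ) (C : ℕ → Matrix (Fin m) (Fin m) ℝ)
    (Z : Matrix (Fin m) (Fin m) ℝ) : Prop :=
  Mle 0 Z ∧ Z = ∑ ℓ ∈ Finset.range (p + 1), C ℓ * Z ^ ℓ ∧
    ∀ Y, Mle 0 Y → Y = ∑ ℓ ∈ Finset.range (p + 1), C ℓ * Y ^ ℓ → Mle Z Y

/-!
Every map involved is monotone on nonnegative matrices and maps substochastic matrices to
substochastic ones, so minimal solutions arise as limits of increasing iterations started at `0`.
For the polynomial equation with coefficients `A_ℓ(X_k)` this gives `X_{k+1}`, which is monotone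
in `X_k`. Regrouping `∑ⱼ Aⱼ Yʲ = ∑_ℓ A_ℓ(Y) Y^ℓ` by levels shows that a nonnegative solution `Y`
of the full equation is a supersolution of every polynomial equation with `X_k ≤ Y`; hence
`X_k ≤ G` for all `k`, and `X_k` increases to some `L ≤ G`. Passing to the limit in
`∑ Aⱼ X_kʲ = ∑ A_ℓ(X_k) X_k^ℓ ≤ X_{k+1} = ∑ A_ℓ(X_k) X_{k+1}^ℓ ≤ ∑ Aⱼ Lʲ`
shows that `L` solves the full equation, so `L = G` by minimality of `G`.
-/

open Filter Topology

namespace Mle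

variable {m : ℕ} {X Y Z W : Matrix (Fin m) (Fin m) ℝ}

theorem refl (X : Matrix (Fin m) (Fin m) ℝ) : Mle X X := fun _ _ => le_rfl

theorem of_eq (h : X = Y) : Mle X Y := h ▸ refl X

theorem trans (h₁ : Mle X Y) (h₂ : Mle Y Z) : Mle X Z := fun i j => (h₁ i j).trans (h₂ i j)

theorem antisymm (h₁ : Mle X Y) (h₂ : Mle Y X) : X = Y :=
  Matrix.ext fun i j => (h₁ i j).antisymm (h₂ i j)

theorem mul (hX : Mle 0 X) (hXY : Mle X Y) (hZ : Mle 0 Z) (hZW : Mle Z W) :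
    Mle (X * Z) (Y * W) := fun i j => by
  simp only [Matrix.mul_apply]
  exact Finset.sum_le_sum fun k _ =>
    mul_le_mul (hXY i k) (hZW k j) (hZ k j) ((hX i k).trans (hXY i k))

theorem mul_nonneg (hX : Mle 0 X) (hY : Mle 0 Y) : Mle 0 (X * Y) := by
  simpa using mul (refl 0) hX (refl 0) hY

theorem one_nonneg : Mle 0 (1 : Matrix (Fin m) (Fin m) ℝ) := fun i j => by
  by_cases h : i = j <;> simp [Matrix.one_apply, h]

theorem pow_nonneg (hX : Mle 0 X) (n : ℕ) : Mle 0 (X ^ n) := by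
  induction n with
  | zero => exact one_nonneg
  | succ n ih => rw [pow_succ]; exact mul_nonneg ih hX

theorem pow (hX : Mle 0 X) (hXY : Mle X Y) (n : ℕ) : Mle (X ^ n) (Y ^ n) := by
  induction n with
  | zero => exact refl 1
  | succ n ih => rw [pow_succ, pow_succ]; exact mul (pow_nonneg hX n) ih hX hXY

theorem sum {ι : Type*} {s : Finset ι} {f g : ι → Matrix (Fin m) (Fin m) ℝ}
    (h : ∀ i ∈ s, Mle (f i) (g i)) : Mle (∑ i ∈ s, f i) (∑ i ∈ s, g i) := fun r c => by
  simpa only [Matrix.sum_apply] using Finset.sum_le_sum fun i hi => h i hi r c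

theorem sum_nonneg {ι : Type*} {s : Finset ι} {f : ι → Matrix (Fin m) (Fin m) ℝ}
    (h : ∀ i ∈ s, Mle 0 (f i)) : Mle 0 (∑ i ∈ s, f i) := by
  simpa using sum (f := 0) h

end Mle

section Series

variable {m : ℕ} {ι : Type*} {f g : ι → Matrix (Fin m) (Fin m) ℝ}

theorem Matrix.summable_apply (hf : Summable f) (i j : Fin m) : Summable fun n => f n i j :=
  Pi.summable.mp (Pi.summable.mp hf i) j

theorem Matrix.tsum_apply (hf : Summable f) (i j : Fin m) :
    (∑' n, f n) i j = ∑' n, f n i j :=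
  (Pi.hasSum.mp (Pi.hasSum.mp hf.hasSum i) j).tsum_eq.symm

theorem Mle.tsum (hf : Summable f) (hg : Summable g) (h : ∀ n, Mle (f n) (g n)) :
    Mle (∑' n, f n) (∑' n, g n) := fun i j => by
  rw [Matrix.tsum_apply hf, Matrix.tsum_apply hg]
  exact (Matrix.summable_apply hf i j).tsum_le_tsum (fun n => h n i j)
    (Matrix.summable_apply hg i j)

theorem Mle.tsum_nonneg (h : ∀ n, Mle 0 (f n)) : Mle 0 (∑' n, f n) := by
  by_cases hf : Summable f
  · simpa using Mle.tsum summable_zero hf h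
  · rw [tsum_eq_zero_of_not_summable hf]; exact Mle.refl 0

theorem Mle.summable_of_le (h0 : ∀ n, Mle 0 (f n)) (h : ∀ n, Mle (f n) (g n))
    (hg : Summable g) : Summable f :=
  Pi.summable.mpr fun i => Pi.summable.mpr fun j =>
    (Matrix.summable_apply hg i j).of_nonneg_of_le (fun n => h0 n i j) (fun n => h n i j)

theorem Matrix.rowSum_sum (s : Finset ι) (f : ι → Matrix (Fin m) (Fin m) ℝ)
    (r : Fin m) : ∑ c, (∑ ℓ ∈ s, f ℓ) r c = ∑ ℓ ∈ s, ∑ c, f ℓ r c := by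
  simp only [Matrix.sum_apply]
  exact Finset.sum_comm

theorem Matrix.sum_apply_tsum (hf : Summable f) (r : Fin m) :
    ∑ c, (∑' n, f n) r c = ∑' n, ∑ c, f n r c := by
  simp only [Matrix.tsum_apply hf]
  exact (Summable.tsum_finsetSum fun c _ => Matrix.summable_apply hf r c).symm

end Series

section Limits

variable {m : ℕ} {X Y f : ℕ → Matrix (Fin m) (Fin m) ℝ}
  {L L' B W : Matrix (Fin m) (Fin m) ℝ}

theorem Matrix.tendsto_apply (h : Tendsto X atTop (𝓝 L)) (i j : Fin m) :
    Tendsto (fun n => X n i j) atTop (𝓝 (L i j)) :=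
  tendsto_pi_nhds.mp (tendsto_pi_nhds.mp h i) j

theorem Mle.of_tendsto (hX : Tendsto X atTop (𝓝 L)) (hY : Tendsto Y atTop (𝓝 L'))
    (h : ∀ n, Mle (X n) (Y n)) : Mle L L' := fun i j =>
  le_of_tendsto_of_tendsto' (Matrix.tendsto_apply hX i j) (Matrix.tendsto_apply hY i j)
    fun n => h n i j

theorem Mle.exists_tendsto_of_monotone (hmono : ∀ n, Mle (X n) (X (n + 1)))
    (hbdd : ∀ n, Mle (X n) B) : ∃ L, Tendsto X atTop (𝓝 L) ∧ ∀ n, Mle (X n) L := by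
  have hbddAbove (i j : Fin m) : BddAbove (Set.range fun n => X n i j) :=
    ⟨B i j, by rintro _ ⟨n, rfl⟩; exact hbdd n i j⟩
  refine ⟨Matrix.of fun i j => ⨆ n, X n i j, ?_, fun n i j => le_ciSup (hbddAbove i j) n⟩
  exact tendsto_pi_nhds.mpr fun i => tendsto_pi_nhds.mpr fun j =>
    tendsto_atTop_ciSup (monotone_nat_of_le_succ fun n => hmono n i j) (hbddAbove i j)

theorem Mle.sum_range_le_tsum (h0 : ∀ i, Mle 0 (f i)) (hf : Summable f) (N : ℕ) :
    Mle (∑ i ∈ Finset.range N, f i) (∑' i, f i) := fun r c => by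
  rw [Matrix.sum_apply, Matrix.tsum_apply hf]
  exact (Matrix.summable_apply hf r c).sum_le_tsum _ fun i _ => h0 i r c

theorem Mle.tsum_le_of_sum_range_le (hf : Summable f)
    (h : ∀ N, Mle (∑ i ∈ Finset.range N, f i) W) : Mle (∑' i, f i) W :=
  Mle.of_tendsto hf.hasSum.tendsto_sum_nat tendsto_const_nhds h

end Limits

def IsSubstochastic {m : ℕ} (X : Matrix (Fin m) (Fin m) ℝ) : Prop :=
  Mle 0 X ∧ ∀ r, ∑ c, X r c ≤ 1

namespace IsSubstochastic

variable {m : ℕ} {X Y : Matrix (Fin m) (Fin m) ℝ}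

theorem zero : IsSubstochastic (0 : Matrix (Fin m) (Fin m) ℝ) :=
  ⟨Mle.refl 0, fun r => by simp⟩

theorem one : IsSubstochastic (1 : Matrix (Fin m) (Fin m) ℝ) :=
  ⟨Mle.one_nonneg, fun r => by simp [Matrix.one_apply]⟩

theorem apply_le_one (hX : IsSubstochastic X) (r c : Fin m) : X r c ≤ 1 :=
  (Finset.single_le_sum (fun k _ => hX.1 r k) (Finset.mem_univ c)).trans (hX.2 r)

theorem rowSum_mul_le (hX : Mle 0 X) (hY : IsSubstochastic Y) (r : Fin m) :
    ∑ c, (X * Y) r c ≤ ∑ c, X r c := by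
  calc ∑ c, (X * Y) r c = ∑ k, X r k * ∑ c, Y k c := by
        simp only [Matrix.mul_apply, Finset.mul_sum]
        exact Finset.sum_comm
    _ ≤ ∑ k, X r k * 1 :=
        Finset.sum_le_sum fun k _ => mul_le_mul_of_nonneg_left (hY.2 k) (hX r k)
    _ = ∑ c, X r c := by simp

theorem mul (hX : IsSubstochastic X) (hY : IsSubstochastic Y) : IsSubstochastic (X * Y) :=
  ⟨hX.1.mul_nonneg hY.1, fun r => (rowSum_mul_le hX.1 hY r).trans (hX.2 r)⟩

theorem pow (hX : IsSubstochastic X) (n : ℕ) : IsSubstochastic (X ^ n) := by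
  induction n with
  | zero => exact one
  | succ n ih => rw [pow_succ]; exact ih.mul hX

theorem of_tendsto {X : ℕ → Matrix (Fin m) (Fin m) ℝ} {L : Matrix (Fin m) (Fin m) ℝ}
    (h : Tendsto X atTop (𝓝 L)) (hX : ∀ n, IsSubstochastic (X n)) : IsSubstochastic L :=
  ⟨Mle.of_tendsto tendsto_const_nhds h fun n => (hX n).1, fun r =>
    le_of_tendsto' (tendsto_finsetSum _ fun c _ => Matrix.tendsto_apply h r c)
      fun n => (hX n).2 r⟩

end IsSubstochastic


section LeastFixedPoint

variable {m : ℕ} {F : Matrix (Fin m) (Fin m) ℝ → Matrix (Fin m) (Fin m) ℝ}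

theorem isSubstochastic_iterate_zero (hF : ∀ Z, IsSubstochastic Z → IsSubstochastic (F Z))
    (n : ℕ) : IsSubstochastic (F^[n] 0) := by
  induction n with
  | zero => exact IsSubstochastic.zero
  | succ n ih => rw [Function.iterate_succ_apply']; exact hF _ ih

theorem iterate_zero_mle_succ (hmono : ∀ Z W, Mle 0 Z → Mle Z W → Mle (F Z) (F W))
    (hF : ∀ Z, IsSubstochastic Z → IsSubstochastic (F Z)) (n : ℕ) :
    Mle (F^[n] 0) (F^[n + 1] 0) := by
  induction n with
  | zero => exact (hF 0 IsSubstochastic.zero).1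
  | succ n ih =>
    rw [Function.iterate_succ_apply', Function.iterate_succ_apply' F (n + 1)]
    exact hmono _ _ (isSubstochastic_iterate_zero hF n).1 ih

theorem iterate_zero_mle_of_supersolution (hmono : ∀ Z W, Mle 0 Z → Mle Z W → Mle (F Z) (F W))
    (hF : ∀ Z, IsSubstochastic Z → IsSubstochastic (F Z)) {W : Matrix (Fin m) (Fin m) ℝ}
    (hW0 : Mle 0 W) (hW : Mle (F W) W) (n : ℕ) : Mle (F^[n] 0) W := by
  induction n with
  | zero => exact hW0
  | succ n ih =>
    rw [Function.iterate_succ_apply']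
    exact (hmono _ _ (isSubstochastic_iterate_zero hF n).1 ih).trans hW

theorem exists_tendsto_iterate_zero (hmono : ∀ Z W, Mle 0 Z → Mle Z W → Mle (F Z) (F W))
    (hF : ∀ Z, IsSubstochastic Z → IsSubstochastic (F Z)) :
    ∃ L, Tendsto (fun n => F^[n] 0) atTop (𝓝 L) := by
  obtain ⟨L, hL, -⟩ := Mle.exists_tendsto_of_monotone (iterate_zero_mle_succ hmono hF)
    (B := Matrix.of fun _ _ => 1) fun n => (isSubstochastic_iterate_zero hF n).apply_le_one
  exact ⟨L, hL⟩

end LeastFixedPoint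

section PolynomialEquation

variable {m p : ℕ} {C C' : ℕ → Matrix (Fin m) (Fin m) ℝ} {Z W : Matrix (Fin m) (Fin m) ℝ}

structure IsSubstochasticCoeffs (p : ℕ) (C : ℕ → Matrix (Fin m) (Fin m) ℝ) : Prop where
  nonneg : ∀ ℓ ∈ Finset.range (p + 1), Mle 0 (C ℓ)
  rowSum_le : ∀ r, ∑ c, (∑ ℓ ∈ Finset.range (p + 1), C ℓ) r c ≤ 1

noncomputable def polyMap (p : ℕ) (C : ℕ → Matrix (Fin m) (Fin m) ℝ)
    (Z : Matrix (Fin m) (Fin m) ℝ) : Matrix (Fin m) (Fin m) ℝ :=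
  ∑ ℓ ∈ Finset.range (p + 1), C ℓ * Z ^ ℓ

theorem polyMap_mono (hC : ∀ ℓ ∈ Finset.range (p + 1), Mle 0 (C ℓ)) (hZ : Mle 0 Z)
    (hZW : Mle Z W) : Mle (polyMap p C Z) (polyMap p C W) :=
  Mle.sum fun ℓ hℓ =>
    (hC ℓ hℓ).mul (Mle.refl _) (Mle.pow_nonneg hZ ℓ) (Mle.pow hZ hZW ℓ)

theorem polyMap_mono_coeff (hC : ∀ ℓ ∈ Finset.range (p + 1), Mle 0 (C ℓ))
    (hCC' : ∀ ℓ ∈ Finset.range (p + 1), Mle (C ℓ) (C' ℓ)) (hZ : Mle 0 Z) :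
    Mle (polyMap p C Z) (polyMap p C' Z) :=
  Mle.sum fun ℓ hℓ => (hC ℓ hℓ).mul (hCC' ℓ hℓ) (Mle.pow_nonneg hZ ℓ) (Mle.refl _)

theorem isSubstochastic_polyMap (hC : IsSubstochasticCoeffs p C) (hZ : IsSubstochastic Z) :
    IsSubstochastic (polyMap p C Z) := by
  refine ⟨Mle.sum_nonneg fun ℓ hℓ => (hC.nonneg ℓ hℓ).mul_nonneg (hZ.pow ℓ).1,
    fun r => ?_⟩
  rw [polyMap, Matrix.rowSum_sum]
  calc _ ≤ ∑ ℓ ∈ Finset.range (p + 1), ∑ c, C ℓ r c :=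
        Finset.sum_le_sum fun ℓ hℓ =>
          IsSubstochastic.rowSum_mul_le (hC.nonneg ℓ hℓ) (hZ.pow ℓ) r
    _ = ∑ c, (∑ ℓ ∈ Finset.range (p + 1), C ℓ) r c := (Matrix.rowSum_sum _ C r).symm
    _ ≤ 1 := hC.rowSum_le r

theorem continuous_polyMap : Continuous (polyMap p C) :=
  continuous_finsetSum _ fun ℓ _ => continuous_const.mul (continuous_pow ℓ)

noncomputable def minPolySol (p : ℕ) (C : ℕ → Matrix (Fin m) (Fin m) ℝ) :
    Matrix (Fin m) (Fin m) ℝ :=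
  limUnder atTop fun n => (polyMap p C)^[n] 0

theorem tendsto_minPolySol (hC : IsSubstochasticCoeffs p C) :
    Tendsto (fun n => (polyMap p C)^[n] 0) atTop (𝓝 (minPolySol p C)) :=
  tendsto_nhds_limUnder <| exists_tendsto_iterate_zero (fun _ _ => polyMap_mono hC.nonneg)
    fun _ => isSubstochastic_polyMap hC

theorem isSubstochastic_minPolySol (hC : IsSubstochasticCoeffs p C) :
    IsSubstochastic (minPolySol p C) :=
  IsSubstochastic.of_tendsto (tendsto_minPolySol hC)
    (isSubstochastic_iterate_zero fun _ => isSubstochastic_polyMap hC)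

theorem polyMap_minPolySol (hC : IsSubstochasticCoeffs p C) :
    polyMap p C (minPolySol p C) = minPolySol p C :=
  isFixedPt_of_tendsto_iterate (tendsto_minPolySol hC) continuous_polyMap.continuousAt

theorem minPolySol_mle_of_supersolution (hC : IsSubstochasticCoeffs p C)
    (hW0 : Mle 0 W) (hW : Mle (polyMap p C W) W) : Mle (minPolySol p C) W :=
  Mle.of_tendsto (tendsto_minPolySol hC) tendsto_const_nhds <|
    iterate_zero_mle_of_supersolution (fun _ _ => polyMap_mono hC.nonneg)
      (fun _ => isSubstochastic_polyMap hC) hW0 hW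

theorem isMinPolySol_minPolySol (hC : IsSubstochasticCoeffs p C) :
    IsMinPolySol p C (minPolySol p C) :=
  ⟨(isSubstochastic_minPolySol hC).1, (polyMap_minPolySol hC).symm,
    fun _ hY0 hY => minPolySol_mle_of_supersolution hC hY0 (Mle.of_eq hY.symm)⟩

theorem minPolySol_mono (hC : IsSubstochasticCoeffs p C) (hC' : IsSubstochasticCoeffs p C')
    (hCC' : ∀ ℓ ∈ Finset.range (p + 1), Mle (C ℓ) (C' ℓ)) :
    Mle (minPolySol p C) (minPolySol p C') := by
  have hsol' := isSubstochastic_minPolySol hC'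
  refine minPolySol_mle_of_supersolution hC hsol'.1 ?_
  exact (polyMap_mono_coeff hC.nonneg hCC' hsol'.1).trans (Mle.of_eq (polyMap_minPolySol hC'))

end PolynomialEquation

section PowerSeries

variable {m : ℕ} {B : ℕ → Matrix (Fin m) (Fin m) ℝ} {X Y W : Matrix (Fin m) (Fin m) ℝ}

noncomputable def evalSeries (B : ℕ → Matrix (Fin m) (Fin m) ℝ)
    (X : Matrix (Fin m) (Fin m) ℝ) : Matrix (Fin m) (Fin m) ℝ :=
  ∑' i, B i * X ^ i

theorem summable_mul_pow_of_isSubstochastic (hB0 : ∀ i, Mle 0 (B i)) (hB : Summable B)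
    (hX : IsSubstochastic X) : Summable fun i => B i * X ^ i :=
  Mle.summable_of_le (fun i => (hB0 i).mul_nonneg (hX.pow i).1)
    (fun i => (hB0 i).mul (Mle.refl _) (hX.pow i).1 fun r c => (hX.pow i).apply_le_one r c)
    (hB.mul_right (Matrix.of fun _ _ => 1))

theorem evalSeries_nonneg (hB0 : ∀ i, Mle 0 (B i)) (hX : Mle 0 X) : Mle 0 (evalSeries B X) :=
  Mle.tsum_nonneg fun i => (hB0 i).mul_nonneg (Mle.pow_nonneg hX i)

theorem evalSeries_mono (hB0 : ∀ i, Mle 0 (B i)) (hB : Summable B) (hX : IsSubstochastic X)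
    (hY : IsSubstochastic Y) (hXY : Mle X Y) : Mle (evalSeries B X) (evalSeries B Y) :=
  Mle.tsum (summable_mul_pow_of_isSubstochastic hB0 hB hX)
    (summable_mul_pow_of_isSubstochastic hB0 hB hY)
    fun i => (hB0 i).mul (Mle.refl _) (hX.pow i).1 (Mle.pow hX.1 hXY i)

theorem rowSum_evalSeries_le (hB0 : ∀ i, Mle 0 (B i)) (hB : Summable B) (hX : IsSubstochastic X)
    (r : Fin m) : ∑ c, evalSeries B X r c ≤ ∑ c, (∑' i, B i) r c := by
  have hs := summable_mul_pow_of_isSubstochastic hB0 hB hX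
  rw [evalSeries, Matrix.sum_apply_tsum hs, Matrix.sum_apply_tsum hB]
  exact Summable.tsum_le_tsum (fun i => IsSubstochastic.rowSum_mul_le (hB0 i) (hX.pow i) r)
    (summable_sum fun c _ => Matrix.summable_apply hs r c)
    (summable_sum fun c _ => Matrix.summable_apply hB r c)

theorem evalSeries_le_of_tendsto (hB0 : ∀ i, Mle 0 (B i)) (hB : Summable B)
    {X : ℕ → Matrix (Fin m) (Fin m) ℝ} (hX : ∀ k, IsSubstochastic (X k))
    (hXL : Tendsto X atTop (𝓝 Y)) (hY : IsSubstochastic Y)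
    (hW : ∀ k, Mle (evalSeries B (X k)) W) : Mle (evalSeries B Y) W := by
  refine Mle.tsum_le_of_sum_range_le (summable_mul_pow_of_isSubstochastic hB0 hB hY) fun N => ?_
  have hcont : Continuous fun Z : Matrix (Fin m) (Fin m) ℝ =>
      ∑ i ∈ Finset.range N, B i * Z ^ i :=
    continuous_finsetSum _ fun i _ => continuous_const.mul (continuous_pow i)
  refine Mle.of_tendsto ((hcont.tendsto Y).comp hXL) tendsto_const_nhds fun k => ?_
  exact (Mle.sum_range_le_tsum (fun i => (hB0 i).mul_nonneg ((hX k).pow i).1)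
    (summable_mul_pow_of_isSubstochastic hB0 hB (hX k)) N).trans (hW k)

end PowerSeries

section LevelDecomposition

variable {m p ℓ : ℕ} {A : ℕ → Matrix (Fin m) (Fin m) ℝ}
  {Aℓ : ℕ → ℕ → Matrix (Fin m) (Fin m) ℝ} {Y : Matrix (Fin m) (Fin m) ℝ}

def shiftedCoeff (Aℓ : ℕ → ℕ → Matrix (Fin m) (Fin m) ℝ) (ℓ j : ℕ) :
    Matrix (Fin m) (Fin m) ℝ :=
  if ℓ ≤ j then Aℓ ℓ (j - ℓ) else 0

theorem shiftedCoeff_nonneg (hAℓ0 : ∀ ℓ i, Mle 0 (Aℓ ℓ i)) (ℓ j : ℕ) :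
    Mle 0 (shiftedCoeff Aℓ ℓ j) := by
  unfold shiftedCoeff
  split_ifs
  exacts [hAℓ0 _ _, Mle.refl 0]

theorem shiftedCoeff_le (hAℓ0 : ∀ ℓ i, Mle 0 (Aℓ ℓ i))
    (hcompat : ∀ j, A j = ∑ ℓ ∈ Finset.range (p + 1), shiftedCoeff Aℓ ℓ j)
    (hℓ : ℓ ∈ Finset.range (p + 1)) (j : ℕ) : Mle (shiftedCoeff Aℓ ℓ j) (A j) :=
  fun r c => by
  rw [hcompat j, Matrix.sum_apply]
  exact Finset.single_le_sum (f := fun ℓ => shiftedCoeff Aℓ ℓ j r c)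
    (fun ℓ _ => shiftedCoeff_nonneg hAℓ0 ℓ j r c) hℓ

theorem summable_shiftedCoeff_mul_pow (hAℓ0 : ∀ ℓ i, Mle 0 (Aℓ ℓ i))
    (hcompat : ∀ j, A j = ∑ ℓ ∈ Finset.range (p + 1), shiftedCoeff Aℓ ℓ j)
    (hY0 : Mle 0 Y) (hY : Summable fun j => A j * Y ^ j) (hℓ : ℓ ∈ Finset.range (p + 1)) :
    Summable fun j => shiftedCoeff Aℓ ℓ j * Y ^ j :=
  Mle.summable_of_le (fun j => (shiftedCoeff_nonneg hAℓ0 ℓ j).mul_nonneg (Mle.pow_nonneg hY0 j))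
    (fun j => (shiftedCoeff_nonneg hAℓ0 ℓ j).mul (shiftedCoeff_le hAℓ0 hcompat hℓ j)
      (Mle.pow_nonneg hY0 j) (Mle.refl _)) hY

theorem hasSum_mul_pow_mul_pow (hAℓ0 : ∀ ℓ i, Mle 0 (Aℓ ℓ i))
    (hcompat : ∀ j, A j = ∑ ℓ ∈ Finset.range (p + 1), shiftedCoeff Aℓ ℓ j)
    (hY0 : Mle 0 Y) (hY : Summable fun j => A j * Y ^ j) (hℓ : ℓ ∈ Finset.range (p + 1)) :
    HasSum (fun i => Aℓ ℓ i * Y ^ i * Y ^ ℓ) (∑' j, shiftedCoeff Aℓ ℓ j * Y ^ j) := by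
  have hzero : ∀ j ∉ Set.range (· + ℓ), shiftedCoeff Aℓ ℓ j * Y ^ j = 0 := fun j hj => by
    rw [shiftedCoeff, if_neg fun h => hj ⟨j - ℓ, Nat.sub_add_cancel h⟩, zero_mul]
  have hshift := ((add_left_injective ℓ).hasSum_iff hzero).mpr
    (summable_shiftedCoeff_mul_pow hAℓ0 hcompat hY0 hY hℓ).hasSum
  convert hshift using 1
  funext i
  simp [shiftedCoeff, pow_add, mul_assoc]

theorem evalSeries_eq_sum_tsum (hAℓ0 : ∀ ℓ i, Mle 0 (Aℓ ℓ i))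
    (hcompat : ∀ j, A j = ∑ ℓ ∈ Finset.range (p + 1), shiftedCoeff Aℓ ℓ j)
    (hY0 : Mle 0 Y) (hY : Summable fun j => A j * Y ^ j) :
    evalSeries A Y = ∑ ℓ ∈ Finset.range (p + 1), ∑' i, Aℓ ℓ i * Y ^ i * Y ^ ℓ := by
  have hsum : HasSum (fun j => A j * Y ^ j)
      (∑ ℓ ∈ Finset.range (p + 1), ∑' j, shiftedCoeff Aℓ ℓ j * Y ^ j) := by
    have := hasSum_sum fun ℓ hℓ =>
      (summable_shiftedCoeff_mul_pow hAℓ0 hcompat hY0 hY hℓ).hasSum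
    simpa only [← Finset.sum_mul, ← hcompat] using this
  rw [evalSeries, hsum.tsum_eq]
  exact Finset.sum_congr rfl fun ℓ hℓ =>
    (hasSum_mul_pow_mul_pow hAℓ0 hcompat hY0 hY hℓ).tsum_eq.symm

end LevelDecomposition

structure IsLevelSplitting {m : ℕ} (p : ℕ) (A : ℕ → Matrix (Fin m) (Fin m) ℝ)
    (Aℓ : ℕ → ℕ → Matrix (Fin m) (Fin m) ℝ) : Prop where
  nonneg_level : ∀ ℓ i, Mle 0 (Aℓ ℓ i)
  summable : Summable A
  rowSum_tsum_le : ∀ r, ∑ c, (∑' i, A i) r c ≤ 1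
  eq_sum : ∀ j, A j = ∑ ℓ ∈ Finset.range (p + 1), shiftedCoeff Aℓ ℓ j

noncomputable def levelCoeffs {m : ℕ} (Aℓ : ℕ → ℕ → Matrix (Fin m) (Fin m) ℝ)
    (X : Matrix (Fin m) (Fin m) ℝ) (ℓ : ℕ) : Matrix (Fin m) (Fin m) ℝ :=
  evalSeries (Aℓ ℓ) X

namespace IsLevelSplitting

variable {m p ℓ : ℕ} {A : ℕ → Matrix (Fin m) (Fin m) ℝ}
  {Aℓ : ℕ → ℕ → Matrix (Fin m) (Fin m) ℝ} {X Y : Matrix (Fin m) (Fin m) ℝ}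

theorem nonneg (h : IsLevelSplitting p A Aℓ) (j : ℕ) : Mle 0 (A j) :=
  h.eq_sum j ▸ Mle.sum_nonneg fun ℓ _ => shiftedCoeff_nonneg h.nonneg_level ℓ j

theorem summable_level (h : IsLevelSplitting p A Aℓ) (hℓ : ℓ ∈ Finset.range (p + 1)) :
    Summable (Aℓ ℓ) := by
  simpa using (hasSum_mul_pow_mul_pow h.nonneg_level h.eq_sum Mle.one_nonneg
    (by simpa using h.summable) hℓ).summable

theorem tsum_eq_sum_tsum (h : IsLevelSplitting p A Aℓ) :
    ∑' j, A j = ∑ ℓ ∈ Finset.range (p + 1), ∑' i, Aℓ ℓ i := by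
  simpa [evalSeries] using evalSeries_eq_sum_tsum h.nonneg_level h.eq_sum Mle.one_nonneg
    (by simpa using h.summable)

theorem isSubstochasticCoeffs_levelCoeffs (h : IsLevelSplitting p A Aℓ)
    (hX : IsSubstochastic X) : IsSubstochasticCoeffs p (levelCoeffs Aℓ X) := by
  refine ⟨fun ℓ _ => evalSeries_nonneg (h.nonneg_level ℓ) hX.1, fun r => ?_⟩
  calc ∑ c, (∑ ℓ ∈ Finset.range (p + 1), levelCoeffs Aℓ X ℓ) r c
      = ∑ ℓ ∈ Finset.range (p + 1), ∑ c, levelCoeffs Aℓ X ℓ r c :=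
        Matrix.rowSum_sum _ _ r
    _ ≤ ∑ ℓ ∈ Finset.range (p + 1), ∑ c, (∑' i, Aℓ ℓ i) r c :=
        Finset.sum_le_sum fun ℓ hℓ =>
          rowSum_evalSeries_le (h.nonneg_level ℓ) (h.summable_level hℓ) hX r
    _ = ∑ c, (∑' j, A j) r c := by rw [h.tsum_eq_sum_tsum, Matrix.rowSum_sum]
    _ ≤ 1 := h.rowSum_tsum_le r

theorem summable_level_mul_pow (h : IsLevelSplitting p A Aℓ) (hX : IsSubstochastic X)
    (hℓ : ℓ ∈ Finset.range (p + 1)) : Summable fun i => Aℓ ℓ i * X ^ i :=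
  summable_mul_pow_of_isSubstochastic (h.nonneg_level ℓ) (h.summable_level hℓ) hX

theorem polyMap_levelCoeffs (h : IsLevelSplitting p A Aℓ) (hX : IsSubstochastic X)
    (Y : Matrix (Fin m) (Fin m) ℝ) : polyMap p (levelCoeffs Aℓ X) Y =
      ∑ ℓ ∈ Finset.range (p + 1), ∑' i, Aℓ ℓ i * X ^ i * Y ^ ℓ :=
  Finset.sum_congr rfl fun _ hℓ => ((h.summable_level_mul_pow hX hℓ).tsum_mul_right _).symm

theorem polyMap_levelCoeffs_self (h : IsLevelSplitting p A Aℓ) (hX : IsSubstochastic X) :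
    polyMap p (levelCoeffs Aℓ X) X = evalSeries A X := by
  rw [h.polyMap_levelCoeffs hX, evalSeries_eq_sum_tsum h.nonneg_level h.eq_sum hX.1
    (summable_mul_pow_of_isSubstochastic h.nonneg h.summable hX)]

theorem polyMap_levelCoeffs_le (h : IsLevelSplitting p A Aℓ) (hX : IsSubstochastic X)
    (hY0 : Mle 0 Y) (hY : Summable fun j => A j * Y ^ j) (hXY : Mle X Y) :
    Mle (polyMap p (levelCoeffs Aℓ X) Y) (evalSeries A Y) := by
  rw [h.polyMap_levelCoeffs hX, evalSeries_eq_sum_tsum h.nonneg_level h.eq_sum hY0 hY]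
  refine Mle.sum fun ℓ hℓ => Mle.tsum ?_
    (hasSum_mul_pow_mul_pow h.nonneg_level h.eq_sum hY0 hY hℓ).summable fun i => ?_
  · exact (h.summable_level_mul_pow hX hℓ).mul_right _
  · exact ((h.nonneg_level ℓ i).mul_nonneg (hX.pow i).1).mul
      ((h.nonneg_level ℓ i).mul (Mle.refl _) (hX.pow i).1 (Mle.pow hX.1 hXY i))
      (Mle.pow_nonneg hY0 ℓ) (Mle.refl _)

end IsLevelSplitting

noncomputable def outerSeq {m : ℕ} (p : ℕ) (Aℓ : ℕ → ℕ → Matrix (Fin m) (Fin m) ℝ) :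
    ℕ → Matrix (Fin m) (Fin m) ℝ
  | 0 => 0
  | k + 1 => minPolySol p (levelCoeffs Aℓ (outerSeq p Aℓ k))

namespace IsLevelSplitting

variable {m p : ℕ} {A : ℕ → Matrix (Fin m) (Fin m) ℝ}
  {Aℓ : ℕ → ℕ → Matrix (Fin m) (Fin m) ℝ} {Y L : Matrix (Fin m) (Fin m) ℝ}

theorem isSubstochastic_outerSeq (h : IsLevelSplitting p A Aℓ) (k : ℕ) :
    IsSubstochastic (outerSeq p Aℓ k) := by
  induction k with
  | zero => exact IsSubstochastic.zero
  | succ k ih =>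
    exact isSubstochastic_minPolySol (h.isSubstochasticCoeffs_levelCoeffs ih)

theorem outerSeq_mle_succ (h : IsLevelSplitting p A Aℓ) (k : ℕ) :
    Mle (outerSeq p Aℓ k) (outerSeq p Aℓ (k + 1)) := by
  induction k with
  | zero => exact (h.isSubstochastic_outerSeq 1).1
  | succ k ih =>
    have hX := h.isSubstochastic_outerSeq k
    have hX' := h.isSubstochastic_outerSeq (k + 1)
    exact minPolySol_mono (h.isSubstochasticCoeffs_levelCoeffs hX)
      (h.isSubstochasticCoeffs_levelCoeffs hX') fun ℓ hℓ =>
        evalSeries_mono (h.nonneg_level ℓ) (h.summable_level hℓ) hX hX' ih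

theorem outerSeq_mle_of_supersolution (h : IsLevelSplitting p A Aℓ) (hY0 : Mle 0 Y)
    (hY : Summable fun j => A j * Y ^ j) (hYsup : Mle (evalSeries A Y) Y) (k : ℕ) :
    Mle (outerSeq p Aℓ k) Y := by
  induction k with
  | zero => exact hY0
  | succ k ih =>
    have hX := h.isSubstochastic_outerSeq k
    exact minPolySol_mle_of_supersolution (h.isSubstochasticCoeffs_levelCoeffs hX) hY0
      ((h.polyMap_levelCoeffs_le hX hY0 hY ih).trans hYsup)

theorem evalSeries_eq_of_tendsto_outerSeq (h : IsLevelSplitting p A Aℓ)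
    (hXL : Tendsto (outerSeq p Aℓ) atTop (𝓝 L)) (hXleL : ∀ k, Mle (outerSeq p Aℓ k) L) :
    evalSeries A L = L := by
  set X := outerSeq p Aℓ
  have hX := h.isSubstochastic_outerSeq
  have hC (k : ℕ) := h.isSubstochasticCoeffs_levelCoeffs (hX k)
  have hL := IsSubstochastic.of_tendsto hXL hX
  have hsL := summable_mul_pow_of_isSubstochastic h.nonneg h.summable hL
  have hfix (k : ℕ) : polyMap p (levelCoeffs Aℓ (X k)) (X (k + 1)) = X (k + 1) :=
    polyMap_minPolySol (hC k)
  refine Mle.antisymm (evalSeries_le_of_tendsto h.nonneg h.summable hX hXL hL fun k => ?_) ?_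
  · rw [← h.polyMap_levelCoeffs_self (hX k)]
    exact (polyMap_mono (hC k).nonneg (hX k).1 (h.outerSeq_mle_succ k)).trans
      ((Mle.of_eq (hfix k)).trans (hXleL (k + 1)))
  · refine Mle.of_tendsto (hXL.comp (tendsto_add_atTop_nat 1)) tendsto_const_nhds fun k => ?_
    rw [Function.comp_apply, ← hfix k]
    exact (polyMap_mono (hC k).nonneg (hX (k + 1)).1 (hXleL (k + 1))).trans
      (h.polyMap_levelCoeffs_le (hX k) hL.1 hsL (hXleL k))

end IsLevelSplitting

theorem stmt2_general (m : ℕ) (p : ℕ)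
    (A : ℕ → Matrix (Fin m) (Fin m) ℝ)
    (Aℓ : ℕ → ℕ → Matrix (Fin m) (Fin m) ℝ)
    (hAℓ0 : ∀ ℓ i, Mle 0 (Aℓ ℓ i))
    (hsum : Summable A)
    (hrow : ∀ k, ∑ j, (∑' i, A i) k j ≤ 1)
    (hcompat : ∀ i, A i = ∑ ℓ ∈ Finset.range (p + 1),
      if ℓ ≤ i then Aℓ ℓ (i - ℓ) else 0)
    (G : Matrix (Fin m) (Fin m) ℝ) (hG : IsMinSol A G) :
    ∃ X : ℕ → Matrix (Fin m) (Fin m) ℝ,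
      X 0 = 0 ∧
      (∀ k, IsMinPolySol p (fun ℓ => ∑' i, Aℓ ℓ i * (X k) ^ i) (X (k + 1))) ∧
      (∀ k, Mle 0 (X k) ∧ Mle (X k) (X (k + 1)) ∧ ∀ r, ∑ c, X (k + 1) r c ≤ 1) ∧
      Filter.Tendsto X Filter.atTop (nhds G) := by
  have h : IsLevelSplitting p A Aℓ := ⟨hAℓ0, hsum, hrow, hcompat⟩
  obtain ⟨hG0, hGs, hGeq, hGmin⟩ := hG
  have hX := h.isSubstochastic_outerSeq
  have hXG := h.outerSeq_mle_of_supersolution hG0 hGs (Mle.of_eq hGeq.symm)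
  obtain ⟨L, hXL, hXleL⟩ := Mle.exists_tendsto_of_monotone h.outerSeq_mle_succ hXG
  have hL := IsSubstochastic.of_tendsto hXL hX
  have hLG : L = G := Mle.antisymm (Mle.of_tendsto hXL tendsto_const_nhds hXG)
    (hGmin L hL.1 (summable_mul_pow_of_isSubstochastic h.nonneg hsum hL)
      (h.evalSeries_eq_of_tendsto_outerSeq hXL hXleL).symm)
  exact ⟨outerSeq p Aℓ, rfl,
    fun k => isMinPolySol_minPolySol (h.isSubstochasticCoeffs_levelCoeffs (hX k)),
    fun k => ⟨(hX k).1, h.outerSeq_mle_succ k, (hX (k + 1)).2⟩, hLG ▸ hXL⟩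

/-- Here `A i` denotes `A_{i-1}` of the paper, `p = q+1 ≥ 0`, and
`Aℓ ℓ' i` denotes `A_{ℓ'-1, i}` (so `ℓ = ℓ'-1` ranges over `-1,…,q`).  The
compatibility condition `A_i = ∑_{ℓ=-1}^q A_{ℓ, i-ℓ}` becomes `hcompat`. -/
theorem stmt2 (m : ℕ) (hm : 1 ≤ m) (p : ℕ)
    (A : ℕ → Matrix (Fin m) (Fin m) ℝ)
    (Aℓ : ℕ → ℕ → Matrix (Fin m) (Fin m) ℝ)
    (hA0 : ∀ i, Mle 0 (A i)) (hAℓ0 : ∀ ℓ i, Mle 0 (Aℓ ℓ i))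
    (hsum : Summable A)
    (hrow : ∀ k, ∑ j, (∑' i, A i) k j ≤ 1)
    (hcompat : ∀ i, A i = ∑ ℓ ∈ Finset.range (p + 1),
      if ℓ ≤ i then Aℓ ℓ (i - ℓ) else 0)
    (hAf : ∀ ℓ (X : Matrix (Fin m) (Fin m) ℝ), Mle 0 X → (∀ r, ∑ c, X r c ≤ 1) →
      Summable (fun i => Aℓ ℓ i * X ^ i))
    (G : Matrix (Fin m) (Fin m) ℝ) (hG : IsMinSol A G) :
    ∃ X : ℕ → Matrix (Fin m) (Fin m) ℝ,
      X 0 = 0 ∧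
      (∀ k, IsMinPolySol p (fun ℓ => ∑' i, Aℓ ℓ i * (X k) ^ i) (X (k + 1))) ∧
      (∀ k, Mle 0 (X k) ∧ Mle (X k) (X (k + 1)) ∧ ∀ r, ∑ c, X (k + 1) r c ≤ 1) ∧
      Filter.Tendsto X Filter.atTop (nhds G) :=
  stmt2_general m p A Aℓ hAℓ0 hsum hrow hcompat G hG
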